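/- arXiv:2004.01869 — 2 statements merged into one kernel-verified Lean document; each statement's English description precedes it below -/
import Mathlib

section
/- Let C ⊆ R^{n×n} be star-shaped in Z* and let G : R^{n×n} → R be continuous with G(0) = 0 and G(λ(Z* − Z)) ≤ λ G(Z* − Z) for all λ ∈ [0,1] and Z ∈ C. Let r > 0 and suppose: (i) for all Z ∈ C with G(Z* − Z) ≤ r one has ⟨B, Z* − Z⟩ ≥ G(Z* − Z); (ii) for all Z ∈ C with G(Z* − Z) ≤ r one has ⟨W, Z − Z*⟩ ≤ r/2. Then any maximizer Ẑ of Z ↦ ⟨B + W, Z⟩ over C satisfies G(Z* − Ẑ) ≤ r. -/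
open Finset

/-- trace inner product `⟨M,N⟩ = Tr(M Nᵀ)` on real matrices -/
noncomputable def ip {n : ℕ} (M N : Matrix (Fin n) (Fin n) ℝ) : ℝ :=
  ∑ i, ∑ j, M i j * N i j

lemma ip_sub {n : ℕ} (M X Y : Matrix (Fin n) (Fin n) ℝ) :
    ip M (X - Y) = ip M X - ip M Y := by
  simp [ip, Matrix.sub_apply, mul_sub, Finset.sum_sub_distrib]

lemma ip_smul {n : ℕ} (M : Matrix (Fin n) (Fin n) ℝ) (t : ℝ) (X : Matrix (Fin n) (Fin n) ℝ) :
    ip M (t • X) = t * ip M X := by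
  simp only [ip, Matrix.smul_apply, smul_eq_mul, Finset.mul_sum]
  congr 1; ext i; congr 1; ext j; ring

lemma ip_add_left {n : ℕ} (M N X : Matrix (Fin n) (Fin n) ℝ) :
    ip (M + N) X = ip M X + ip N X := by
  simp [ip, Matrix.add_apply, add_mul, Finset.sum_add_distrib]

/-- deterministic core of estimation in the G-metric under local curvature. -/
theorem stmt_2 {n : ℕ} (B W : Matrix (Fin n) (Fin n) ℝ)
    (C : Set (Matrix (Fin n) (Fin n) ℝ)) (Zstar Zhat : Matrix (Fin n) (Fin n) ℝ)
    (G : Matrix (Fin n) (Fin n) ℝ → ℝ)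
    (hGcont : Continuous G) (hG0 : G 0 = 0)
    (hGhom : ∀ Z ∈ C, ∀ t : ℝ, t ∈ Set.Icc (0:ℝ) 1 →
      G (t • (Zstar - Z)) ≤ t * G (Zstar - Z))
    (hZstarC : Zstar ∈ C)
    (hstar : ∀ Z ∈ C, ∀ t : ℝ, t ∈ Set.Icc (0:ℝ) 1 → t • Z + (1 - t) • Zstar ∈ C)
    (r : ℝ) (hr : 0 < r)
    (hcurv : ∀ Z ∈ C, G (Zstar - Z) ≤ r → G (Zstar - Z) ≤ ip B (Zstar - Z))
    (hosc : ∀ Z ∈ C, G (Zstar - Z) ≤ r → ip W (Z - Zstar) ≤ r / 2)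
    (hZhatC : Zhat ∈ C)
    (hZhatMax : ∀ Z ∈ C, ip (B + W) Z ≤ ip (B + W) Zhat) :
    G (Zstar - Zhat) ≤ r := by
  by_contra hcon
  push_neg at hcon
  -- the function t ↦ G (t • (Zstar - Zhat)) is continuous, 0 at 0, > r at 1
  set f : ℝ → ℝ := fun t => G (t • (Zstar - Zhat)) with hf
  have hfc : Continuous f := hGcont.comp (continuous_id.smul continuous_const)
  have hf0 : f 0 = 0 := by simp [hf, hG0]
  have hf1 : r < f 1 := by simpa [hf] using hcon
  obtain ⟨t0, ht0mem, ht0⟩ : ∃ t0 ∈ Set.Icc (0:ℝ) 1, f t0 = r := by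
    have := intermediate_value_Icc (by norm_num : (0:ℝ) ≤ 1) hfc.continuousOn
    have hrmem : r ∈ Set.Icc (f 0) (f 1) := ⟨by linarith [hf0, hr.le], hf1.le⟩
    obtain ⟨t0, ht0, h⟩ := this hrmem
    exact ⟨t0, ht0, h⟩
  set Zt : Matrix (Fin n) (Fin n) ℝ := t0 • Zhat + (1 - t0) • Zstar with hZt
  have hZtC : Zt ∈ C := hstar Zhat hZhatC t0 ht0mem
  have hdiff : Zstar - Zt = t0 • (Zstar - Zhat) := by
    rw [hZt]; module
  have hdiff' : Zt - Zstar = t0 • (Zhat - Zstar) := by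
    rw [hZt]; module
  have hGZt : G (Zstar - Zt) = r := by rw [hdiff]; exact ht0
  have h1 : r ≤ ip B (Zstar - Zt) := by
    have := hcurv Zt hZtC (le_of_eq hGZt)
    rwa [hGZt] at this
  have h2 : ip W (Zt - Zstar) ≤ r / 2 := hosc Zt hZtC (le_of_eq hGZt)
  have hB : ip B (Zt - Zstar) ≤ -r := by
    have : ip B (Zt - Zstar) = -(ip B (Zstar - Zt)) := by
      rw [ip_sub, ip_sub]; ring
    linarith [this, h1]
  have hneg : ip (B + W) (Zt - Zstar) ≤ -(r / 2) := by
    rw [ip_add_left]; linarith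
  have hpos : 0 ≤ ip (B + W) (Zt - Zstar) := by
    rw [hdiff', ip_smul, ip_sub]
    have := hZhatMax Zstar hZstarC
    exact mul_nonneg ht0mem.1 (by linarith)
  linarith
end

section
/- Let σ ≥ 0, x* ∈ C^n with |x*_i| = 1, Z* = x* conj(x*)ᵀ, and M the Hermitian matrix with M_{ij} = e^{−σ²/2}Z*_{ij} for i ≠ j, M_{ii} = 1. Then for every Z in C = {Z ∈ H_n : Z ⪰ 0, Z_{ii} = 1}, one has ⟨M, Z* − Z⟩ ≥ (e^{−σ²/2}/2) ‖Z* − Z‖₂², where ‖·‖₂ is the Frobenius norm on C^{n×n} and ⟨M, N⟩ = Tr(M conj(N)ᵀ). -/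
/-!
Entrywise, the claim is `‖w - z‖² ≤ 2 Re (w conj (w - z))` for `‖z‖ ≤ ‖w‖ = 1`, which after
expanding the square is just `‖z‖² ≤ ‖w‖²`. The bound `‖Z_ij‖ ≤ 1` is the nonnegative determinant
of the `2 × 2` principal minor of `Z` on `{i, j}`. The diagonal terms vanish because `Z*` and `Z`
both have unit diagonal, and off the diagonal `M` is a positive multiple of `Z*`.
-/

open scoped ComplexOrder

open Finset

/-- Hermitian trace inner product `⟨M,N⟩ = Tr(M conj(N)ᵀ)` on complex matrices. -/
noncomputable def ipC {n : ℕ} (M N : Matrix (Fin n) (Fin n) ℂ) : ℂ :=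
  ∑ i, ∑ j, M i j * star (N i j)

open scoped RealInnerProductSpace

theorem norm_sub_sq_le_two_mul_inner_sub_left {F : Type*} [NormedAddCommGroup F]
    [InnerProductSpace ℝ F] {w z : F} (h : ‖z‖ ≤ ‖w‖) :
    ‖w - z‖ ^ 2 ≤ 2 * ⟪w - z, w⟫ := by
  rw [norm_sub_sq_real, inner_sub_left, real_inner_self_eq_norm_sq, real_inner_comm]
  linarith [pow_le_pow_left₀ (norm_nonneg z) h 2]

theorem Complex.norm_sub_sq_le_two_mul_re_mul_conj_sub {w z : ℂ} (h : ‖z‖ ≤ ‖w‖) :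
    ‖w - z‖ ^ 2 ≤ 2 * (w * star (w - z)).re :=
  (Complex.inner (w - z) w) ▸ norm_sub_sq_le_two_mul_inner_sub_left h

theorem Matrix.PosSemidef.norm_apply_sq_le {ι 𝕜 : Type*} [Fintype ι] [RCLike 𝕜]
    {A : Matrix ι ι 𝕜} (hA : A.PosSemidef) (i j : ι) :
    ‖A i j‖ ^ 2 ≤ RCLike.re (A i i) * RCLike.re (A j j) := by
  have hdet := (hA.submatrix ![i, j]).det_nonneg
  rw [Matrix.det_fin_two, sub_nonneg] at hdet
  simp only [Matrix.submatrix_apply, Matrix.cons_val_zero, Matrix.cons_val_one] at hdet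
  rw [← hA.1.apply j i, RCLike.star_def, RCLike.mul_conj, ← hA.1.coe_re_apply_self i,
    ← hA.1.coe_re_apply_self j] at hdet
  exact_mod_cast hdet

theorem Matrix.PosSemidef.norm_apply_le_one {ι 𝕜 : Type*} [Fintype ι] [RCLike 𝕜]
    {A : Matrix ι ι 𝕜} (hA : A.PosSemidef) (hdiag : ∀ i, A i i = 1) (i j : ι) :
    ‖A i j‖ ≤ 1 := by
  have := hA.norm_apply_sq_le i j
  rw [hdiag, hdiag, RCLike.one_re, one_mul] at this
  exact (sq_le_one_iff₀ (norm_nonneg _)).mp this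

theorem stmt_8_general {n : ℕ} (σ : ℝ)
    (xstar : Fin n → ℂ) (hx : ∀ i, ‖xstar i‖ = 1)
    (Zstar : Matrix (Fin n) (Fin n) ℂ)
    (hZstar : ∀ i j, Zstar i j = xstar i * star (xstar j))
    (M : Matrix (Fin n) (Fin n) ℂ)
    (hM : ∀ i j, M i j =
      if i = j then 1 else (Real.exp (-σ^2/2) : ℂ) * Zstar i j)
    (Z : Matrix (Fin n) (Fin n) ℂ)
    (hZpsd : Z.PosSemidef) (hZdiag : ∀ i, Z i i = 1) :
    (Real.exp (-σ^2/2) / 2) * ∑ i, ∑ j, ‖Zstar i j - Z i j‖ ^ 2 ≤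
      (ipC M (Zstar - Z)).re := by
  have hZstar_norm (i j) : ‖Zstar i j‖ = 1 := by simp [hZstar, hx]
  have hZstar_diag (i) : Zstar i i = 1 := by
    rw [hZstar, Complex.star_def, Complex.mul_conj', hx, Complex.ofReal_one, one_pow]
  simp only [ipC, Complex.re_sum, mul_sum]
  refine sum_le_sum fun i _ => sum_le_sum fun j _ => ?_
  rcases eq_or_ne i j with rfl | hij
  · simp [hZstar_diag, hZdiag]
  · rw [hM, if_neg hij, Matrix.sub_apply, mul_assoc, Complex.re_ofReal_mul]
    have h_entry := (Zstar i j).norm_sub_sq_le_two_mul_re_mul_conj_sub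
      ((hZpsd.norm_apply_le_one hZdiag i j).trans (hZstar_norm i j).ge)
    nlinarith [h_entry, Real.exp_pos (-σ^2/2)]

/-- quadratic curvature of the excess risk in angular synchronization
(Proposition 6.1): ⟨M, Z*−Z⟩ ≥ (e^{−σ²/2}/2)‖Z*−Z‖₂² on the elliptope. -/
theorem stmt_8 {n : ℕ} (σ : ℝ) (hσ : 0 ≤ σ)
    (xstar : Fin n → ℂ) (hx : ∀ i, ‖xstar i‖ = 1)
    (Zstar : Matrix (Fin n) (Fin n) ℂ)
    (hZstar : ∀ i j, Zstar i j = xstar i * star (xstar j))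
    (M : Matrix (Fin n) (Fin n) ℂ)
    (hM : ∀ i j, M i j =
      if i = j then 1 else (Real.exp (-σ^2/2) : ℂ) * Zstar i j)
    (Z : Matrix (Fin n) (Fin n) ℂ)
    (hZpsd : Z.PosSemidef) (hZdiag : ∀ i, Z i i = 1) :
    (Real.exp (-σ^2/2) / 2) * ∑ i, ∑ j, ‖Zstar i j - Z i j‖ ^ 2 ≤
      (ipC M (Zstar - Z)).re :=
  stmt_8_general σ xstar hx Zstar hZstar M hM Z hZpsd hZdiag
end
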